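/- arXiv:1508.06441 — 5 statements merged into one kernel-verified Lean document; each statement's English description precedes it below -/
import Mathlib

section
/- Let X be a Hausdorff topological space containing an uncountable closed discrete subspace of cardinality ℵ₁. Then the compact space (ω₁ + 1)^{ω₁} (with the product topology, ω₁ + 1 carrying the order topology) embeds topologically into the hyperspace CL(X) of nonempty closed subsets of X equipped with the Fell topology. -/
/-- The hyperspace of nonempty closed subsets of `X`. -/
def CL (X : Type*) [TopologicalSpace X] : Type _ := {A : Set X // A.Nonempty ∧ IsClosed A}

/-- The Fell topology on `CL X`, generated by the subbase of sets
`U⁻ = {A : A ∩ U ≠ ∅}` for `U` open, and `(Kᶜ)⁺ = {A : A ∩ K = ∅}` for `K` compact. -/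
def FellTopology (X : Type*) [TopologicalSpace X] : TopologicalSpace (CL X) :=
  TopologicalSpace.generateFrom
    ({S | ∃ U : Set X, IsOpen U ∧ S = {A : CL X | (A.1 ∩ U).Nonempty}} ∪
     {S | ∃ K : Set X, IsCompact K ∧ S = {A : CL X | A.1 ∩ K = ∅}})

/-!
Let `D` be closed and discrete. Every subset of `D` is closed, a compact set meets `D` in finitely
many points, and each `d ∈ D` is isolated from the rest of `D` by an open set. Hence on the
nonempty subsets of `D` the Fell topology is exactly the product topology of the Cantor cube
`2^D`. The ordinal cube `(ω₁ + 1)^{ω₁}` embeds into `2^{1 + ω₁ × ω₁}` by recording, for every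
coordinate `i` and every `t < ω₁`, whether `t < x i` (plus one coordinate that is always on, to
keep the sets nonempty); the sets `{β | t < β}` are clopen because `{β | β ≤ t} = [0, t + 1)`,
and a continuous injection of a compact space into a Hausdorff one is an embedding. Since
`|1 + ω₁ × ω₁| = ℵ₁ = |D|`, the two embeddings compose.
-/

open Set Topology

attribute [local instance] FellTopology

theorem continuous_decide_lt {α : Type*} [LinearOrder α] [TopologicalSpace α] [OrderTopology α]
    [SuccOrder α] [NoMaxOrder α] (t : α) : Continuous fun b : α => decide (t < b) := by
  refine continuous_discrete_rng.mpr fun b => ?_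
  cases b
  · convert isOpen_Iio (a := Order.succ t) using 1
    ext b
    simp
  · convert isOpen_Ioi (a := t) using 1
    ext b
    simp

namespace Ordinal

variable {ι : Type*} {o : Ordinal}

noncomputable def thresholdCode (x : ι → Iic o) : Option (ι × Iio o) → Bool
  | none => true
  | some (i, t) => decide (t.1 < x i)

theorem continuous_thresholdCode : Continuous (thresholdCode : (ι → Iic o) → _) := by
  refine continuous_pi fun c => ?_
  rcases c with _ | ⟨i, t⟩
  · exact continuous_const
  · exact (continuous_decide_lt t.1).comp (continuous_subtype_val.comp (continuous_apply i))

theorem thresholdCode_injective : Function.Injective (thresholdCode : (ι → Iic o) → _) := by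
  have hle (x y : ι → Iic o) (h : thresholdCode x = thresholdCode y) (i : ι) : x i ≤ y i := by
    by_contra! hlt
    have hyo : (y i : Ordinal) < o := (Subtype.coe_lt_coe.mpr hlt).trans_le (x i).2
    simpa [thresholdCode, hlt] using congrFun h (some (i, ⟨y i, hyo⟩))
  exact fun x y h => funext fun i => le_antisymm (hle x y h i) (hle y x h.symm i)

theorem isEmbedding_thresholdCode : IsEmbedding (thresholdCode : (ι → Iic o) → _) :=
  have : CompactSpace (Iic o) := isCompact_iff_compactSpace.mp (Icc_bot (a := o) ▸ isCompact_Icc)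
  (continuous_thresholdCode.isClosedEmbedding thresholdCode_injective).isEmbedding

end Ordinal

namespace CL

variable {X α Y : Type*} [TopologicalSpace X] [TopologicalSpace α] [DiscreteTopology α]
  [TopologicalSpace Y] {e : α → X}

theorem isOpen_inter_nonempty {U : Set X} (hU : IsOpen U) :
    IsOpen {A : CL X | (A.1 ∩ U).Nonempty} :=
  TopologicalSpace.isOpen_generateFrom_of_mem (Or.inl ⟨U, hU, rfl⟩)

theorem isOpen_inter_eq_empty {K : Set X} (hK : IsCompact K) :
    IsOpen {A : CL X | A.1 ∩ K = ∅} :=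
  TopologicalSpace.isOpen_generateFrom_of_mem (Or.inr ⟨K, hK, rfl⟩)

def ofDiscrete (he : IsClosedEmbedding e) (s : α → Bool) (hs : ∃ a, s a = true) : CL X :=
  ⟨e '' {a | s a = true}, (show {a | s a = true}.Nonempty from hs).image e,
    he.isClosedMap _ (isClosed_discrete _)⟩

theorem ofDiscrete_inter_nonempty_iff (he : IsClosedEmbedding e) {s : α → Bool}
    (hs : ∃ a, s a = true) (U : Set X) :
    ((ofDiscrete he s hs).1 ∩ U).Nonempty ↔ ∃ a ∈ e ⁻¹' U, s a = true := by
  simp [ofDiscrete, Set.Nonempty, and_comm]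

theorem ofDiscrete_inter_eq_empty_iff (he : IsClosedEmbedding e) {s : α → Bool}
    (hs : ∃ a, s a = true) (K : Set X) :
    (ofDiscrete he s hs).1 ∩ K = ∅ ↔ ∀ a ∈ e ⁻¹' K, s a = false := by
  simp only [ofDiscrete, eq_empty_iff_forall_notMem, mem_inter_iff, mem_image]
  grind

theorem apply_mem_ofDiscrete_iff (he : IsClosedEmbedding e) {s : α → Bool}
    (hs : ∃ a, s a = true) (a : α) : e a ∈ (ofDiscrete he s hs).1 ↔ s a = true :=
  he.injective.mem_set_image

theorem continuous_ofDiscrete (he : IsClosedEmbedding e) {φ : Y → α → Bool}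
    (hφ : Continuous φ) (hne : ∀ y, ∃ a, φ y a = true) : Continuous fun y => ofDiscrete he (φ y) (hne y) := by
  have hcoord (a : α) (b : Bool) : IsOpen {y | φ y a = b} :=
    (isOpen_discrete {b}).preimage ((continuous_apply a).comp hφ)
  refine continuous_generateFrom_iff.mpr ?_
  rintro S (⟨U, -, rfl⟩ | ⟨K, hK, rfl⟩)
  · have : (fun y => ofDiscrete he (φ y) (hne y)) ⁻¹' {A : CL X | (A.1 ∩ U).Nonempty} =
        ⋃ a ∈ e ⁻¹' U, {y | φ y a = true} := by
      ext y; simp [ofDiscrete_inter_nonempty_iff]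
    exact this ▸ isOpen_biUnion fun a _ => hcoord a true
  · have : (fun y => ofDiscrete he (φ y) (hne y)) ⁻¹' {A : CL X | A.1 ∩ K = ∅} =
        ⋂ a ∈ e ⁻¹' K, {y | φ y a = false} := by
      ext y; simp [ofDiscrete_inter_eq_empty_iff]
    exact this ▸ (he.isCompact_preimage hK).finite_of_discrete.isOpen_biInter
      fun a _ => hcoord a false

theorem isEmbedding_ofDiscrete (he : IsClosedEmbedding e) {φ : Y → α → Bool}
    (hφ : IsEmbedding φ) (hne : ∀ y, ∃ a, φ y a = true) :
    IsEmbedding fun y => ofDiscrete he (φ y) (hne y) := by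
  set F := fun y => ofDiscrete he (φ y) (hne y)
  have hFcont : Continuous F := continuous_ofDiscrete he hφ.continuous hne
  refine ⟨(isInducing_iff F).mpr (le_antisymm (continuous_iff_le_induced.mp hFcont) ?_),
    fun y z hyz => hφ.injective ?_⟩
  · have hcoord (a : α) (b : Bool) : IsOpen[.induced F (FellTopology X)] {y | φ y a = b} := by
      obtain ⟨U, hU, hUa⟩ := isOpen_induced_iff.mp (he.eq_induced ▸ isOpen_discrete {a})
      refine isOpen_induced_iff.mpr ?_
      cases b
      · have hK : IsCompact (e '' {a}) := isCompact_singleton.image he.continuous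
        refine ⟨_, isOpen_inter_eq_empty hK, ?_⟩
        ext y
        simp [F, apply_mem_ofDiscrete_iff]
      · refine ⟨_, isOpen_inter_nonempty hU, ?_⟩
        ext y
        simp [F, ofDiscrete_inter_nonempty_iff, hUa]
    have hφcont : Continuous[.induced F (FellTopology X), _] φ :=
      @continuous_pi _ _ _ (.induced F (FellTopology X)) _ _ fun a =>
        (@continuous_discrete_rng _ _ (.induced F (FellTopology X)) _ _ _).mpr (hcoord a)
    exact hφ.eq_induced ▸ continuous_iff_le_induced.mp hφcont
  · funext a
    simpa [F, apply_mem_ofDiscrete_iff] using congrArg (fun A : CL X => e a ∈ A.1) hyz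

end CL

theorem stmt_5_general {X : Type*} [TopologicalSpace X]
    (D : Set X) (hDcl : IsClosed D) (hDdisc : DiscreteTopology D)
    (hcard : Cardinal.mk D = Cardinal.aleph 1) :
    ∃ f : (Quotient.out (Cardinal.aleph 1) → Set.Iic (Cardinal.aleph 1).ord) → CL X,
      @Topology.IsEmbedding _ _ _ (FellTopology X) f := by
  obtain ⟨ψ⟩ : Nonempty
      (Option (Quotient.out (Cardinal.aleph 1) × Iio (Cardinal.aleph 1).ord) ≃ D) := by
    rw [← Cardinal.lift_mk_eq']
    simp [Cardinal.mk_Iio_ordinal, hcard]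
  have hcode := (Homeomorph.piCongrLeft (Y := fun _ : D => Bool) ψ).isEmbedding.comp
    Ordinal.isEmbedding_thresholdCode
  exact ⟨_, CL.isEmbedding_ofDiscrete hDcl.isClosedEmbedding_subtypeVal hcode
    fun _ => ⟨ψ none, by simp [Ordinal.thresholdCode]⟩⟩

/-- If a Hausdorff space `X` contains a closed discrete subspace of cardinality `ℵ₁`,
then `(ω₁ + 1)^{ω₁}` embeds into `(CL X, τ_F)`. -/
theorem stmt_5 {X : Type*} [TopologicalSpace X] [T2Space X]
    (D : Set X) (hDcl : IsClosed D) (hDdisc : DiscreteTopology D)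
    (hcard : Cardinal.mk D = Cardinal.aleph 1) :
    ∃ f : (Quotient.out (Cardinal.aleph 1) → Set.Iic (Cardinal.aleph 1).ord) → CL X,
      @Topology.IsEmbedding _ _ _ (FellTopology X) f :=
  stmt_5_general D hDcl hDdisc hcard
end

section
/- If (X,d) is a metric space with nice closed balls (every closed ball that is a proper subset of X is compact), then the Fell topology and the Wijsman topology on CL(X) coincide. -/
/-- The Wijsman topology on `CL X`: the weakest topology making `A ↦ d(x, A)`
continuous for every `x : X`. -/
noncomputable def WijsmanTopology (X : Type*) [MetricSpace X] : TopologicalSpace (CL X) :=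
  ⨅ x : X, TopologicalSpace.induced (fun A : CL X => Metric.infDist x A.1) inferInstance

open Metric Set TopologicalSpace Topology

section aux
variable {X : Type*} [MetricSpace X]

/-- infDist is Wijsman-continuous. -/
lemma wijsman_cont (x : X) :
    Continuous[WijsmanTopology X, _] (fun A : CL X => Metric.infDist x A.1) :=
  continuous_iInf_dom continuous_induced_dom

lemma fell_open_lt (x : X) (r : ℝ) :
    IsOpen[FellTopology X] {A : CL X | Metric.infDist x A.1 < r} := by
  have : {A : CL X | Metric.infDist x A.1 < r} = {A : CL X | (A.1 ∩ ball x r).Nonempty} := by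
    ext A
    simp only [mem_setOf_eq, Metric.infDist_lt_iff A.2.1]
    constructor
    · rintro ⟨y, hy, hd⟩; exact ⟨y, hy, by simpa [mem_ball, dist_comm] using hd⟩
    · rintro ⟨y, hy, hb⟩; exact ⟨y, hy, by simpa [mem_ball, dist_comm] using hb⟩
  rw [this]
  exact .basic _ (Or.inl ⟨ball x r, isOpen_ball, rfl⟩)

lemma fell_open_gt (hnice : ∀ (x : X) (r : ℝ), 0 ≤ r → Metric.closedBall x r ≠ Set.univ →
      IsCompact (Metric.closedBall x r)) (x : X) (a : ℝ) :
    IsOpen[FellTopology X] {A : CL X | a < Metric.infDist x A.1} := by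
  letI := FellTopology X
  have heq : {A : CL X | a < Metric.infDist x A.1}
      = ⋃ r ∈ Set.Ioi a, {A : CL X | A.1 ∩ Metric.closedBall x r = ∅} := by
    ext A
    simp only [mem_setOf_eq, mem_iUnion, mem_Ioi, exists_prop]
    constructor
    · intro h
      refine ⟨(a + Metric.infDist x A.1) / 2, by linarith, ?_⟩
      rw [Set.eq_empty_iff_forall_notMem]
      rintro y ⟨hyA, hyB⟩
      have h1 : Metric.infDist x A.1 ≤ dist x y := Metric.infDist_le_dist_of_mem hyA
      have h2 : dist x y ≤ (a + Metric.infDist x A.1) / 2 := by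
        simpa [dist_comm] using hyB
      linarith
    · rintro ⟨r, hr, hempty⟩
      have : r ≤ Metric.infDist x A.1 := by
        by_contra hlt
        push_neg at hlt
        rcases (Metric.infDist_lt_iff A.2.1).1 hlt with ⟨y, hy, hd⟩
        exact (Set.eq_empty_iff_forall_notMem.1 hempty y)
          ⟨hy, by simpa [Metric.mem_closedBall, dist_comm] using hd.le⟩
      linarith
  rw [heq]
  refine isOpen_iUnion fun r => isOpen_iUnion fun hr => ?_
  by_cases huniv : Metric.closedBall x r = Set.univ
  · have : {A : CL X | A.1 ∩ Metric.closedBall x r = ∅} = ∅ := by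
      rw [Set.eq_empty_iff_forall_notMem]
      intro A hA
      simp only [mem_setOf_eq, huniv, Set.inter_univ] at hA
      exact A.2.1.ne_empty hA
    rw [this]; exact isOpen_empty
  · have hc : IsCompact (Metric.closedBall x r) := by
      rcases lt_or_ge r 0 with h | h
      · rw [Metric.closedBall_eq_empty.2 h]; exact isCompact_empty
      · exact hnice x r h huniv
    exact .basic _ (Or.inr ⟨_, hc, rfl⟩)

end aux

/-- For a metric space with nice closed balls (every proper closed ball is compact),
the Fell and Wijsman topologies on `CL X` coincide. -/
theorem stmt_12 {X : Type*} [MetricSpace X]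
    (hnice : ∀ (x : X) (r : ℝ), 0 ≤ r → Metric.closedBall x r ≠ Set.univ →
      IsCompact (Metric.closedBall x r)) :
    FellTopology X = WijsmanTopology X := by
  apply le_antisymm
  · -- Fell ≤ Wijsman : infDist maps are Fell-continuous
    rw [WijsmanTopology]
    refine le_iInf fun x => ?_
    rw [show (inferInstance : TopologicalSpace ℝ) = .generateFrom {s | ∃ a, s = Ioi a ∨ s = Iio a}
        from OrderTopology.topology_eq_generate_intervals, induced_generateFrom_eq]
    refine le_generateFrom ?_
    rintro s ⟨t, ⟨a, (rfl | rfl)⟩, rfl⟩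
    · exact fell_open_gt hnice x a
    · exact fell_open_lt x a
  · -- Wijsman ≤ Fell
    refine le_generateFrom ?_
    letI := WijsmanTopology X
    rintro s (⟨U, hU, rfl⟩ | ⟨K, hK, rfl⟩)
    · -- hit sets
      have heq : {A : CL X | (A.1 ∩ U).Nonempty}
          = ⋃ x, ⋃ r, ⋃ (_ : 0 < r ∧ ball x r ⊆ U), {A : CL X | Metric.infDist x A.1 < r} := by
        ext A
        simp only [mem_setOf_eq, mem_iUnion]
        constructor
        · rintro ⟨y, hyA, hyU⟩
          rcases Metric.isOpen_iff.1 hU y hyU with ⟨r, hr, hball⟩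
          refine ⟨y, r, ⟨hr, hball⟩, ?_⟩
          calc Metric.infDist y A.1 ≤ dist y y := Metric.infDist_le_dist_of_mem hyA
          _ < r := by simpa using hr
        · rintro ⟨x, r, ⟨hr, hball⟩, hd⟩
          rcases (Metric.infDist_lt_iff A.2.1).1 hd with ⟨y, hyA, hxy⟩
          exact ⟨y, hyA, hball (by simpa [mem_ball, dist_comm] using hxy)⟩
      rw [heq]
      refine isOpen_iUnion fun x => isOpen_iUnion fun r => isOpen_iUnion fun _ => ?_
      exact isOpen_lt (wijsman_cont x) continuous_const
    · -- miss sets of compacts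
      rw [isOpen_iff_forall_mem_open]
      intro A₀ hA₀
      simp only [mem_setOf_eq] at hA₀
      have hpos : ∀ y : K, 0 < Metric.infDist (y : X) A₀.1 := by
        rintro ⟨y, hy⟩
        refine (A₀.2.2.notMem_iff_infDist_pos A₀.2.1).1 fun hmem => ?_
        exact (Set.eq_empty_iff_forall_notMem.1 hA₀ y) ⟨hmem, hy⟩
      set f : K → ℝ := fun y => Metric.infDist (y : X) A₀.1 / 2 with hf
      have hcover : K ⊆ ⋃ y : K, ball (y : X) (f y) := by
        intro z hz
        exact Set.mem_iUnion.2 ⟨⟨z, hz⟩, by simpa [f] using half_pos (hpos ⟨z, hz⟩)⟩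
      rcases hK.elim_finite_subcover (fun y : K => ball (y : X) (f y))
        (fun y => isOpen_ball) hcover with ⟨t, ht⟩
      refine ⟨⋂ y ∈ t, {A : CL X | f y < Metric.infDist (y : X) A.1}, ?_, ?_, ?_⟩
      · rintro A hA
        simp only [Set.mem_iInter, mem_setOf_eq] at hA
        rw [mem_setOf_eq, Set.eq_empty_iff_forall_notMem]
        rintro z ⟨hzA, hzK⟩
        rcases Set.mem_iUnion₂.1 (ht hzK) with ⟨y, hyt, hzb⟩
        have h1 : Metric.infDist (y : X) A.1 ≤ dist (y : X) z :=
          Metric.infDist_le_dist_of_mem hzA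
        have h2 : dist (y : X) z < f y := by simpa [dist_comm] using hzb
        have := hA y hyt
        linarith
      · exact isOpen_biInter_finset fun y _ =>
          isOpen_lt continuous_const (wijsman_cont (y : X))
      · simp only [Set.mem_iInter, mem_setOf_eq]
        intro y _
        have := hpos y
        simp only [f]
        linarith
end

section
/- Let (X,d) be a non-separable metric space with nice closed balls (every closed ball that is a proper subset of X is compact). Then (ω₁ + 1)^{ω₁} embeds topologically into (CL(X), τ_{w(d)}). -/
open Metric Set Topology TopologicalSpace

def HasNiceClosedBalls (X : Type*) [MetricSpace X] : Prop :=
  ∀ (x : X) (r : ℝ), 0 ≤ r → closedBall x r ≠ univ → IsCompact (closedBall x r)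

section MetricSpace

variable {X : Type*} [MetricSpace X]

theorem HasNiceClosedBalls.isCompact_closedBall (hX : HasNiceClosedBalls X) {x : X} {r : ℝ}
    (hr : closedBall x r ≠ univ) : IsCompact (closedBall x r) := by
  rcases le_or_gt 0 r with h | h
  · exact hX x r h hr
  · rw [closedBall_eq_empty.2 h]
    exact isCompact_empty

theorem HasNiceClosedBalls.finite_preimage_closedBall (hX : HasNiceClosedBalls X) {J : Type*}
    {ε : ℝ} (hε : 0 < ε) {e : J → X} (he : Pairwise fun i j => ε ≤ dist (e i) (e j)) {x : X}
    {r : ℝ} (hr : closedBall x r ≠ univ) : (e ⁻¹' closedBall x r).Finite := by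
  let : TopologicalSpace J := ⊥
  have : DiscreteTopology J := ⟨rfl⟩
  exact ((isClosedEmbedding_of_pairwise_le_dist hε he).isCompact_preimage
    (hX.isCompact_closedBall hr)).finite_of_discrete

theorem exists_pairwise_le_dist_not_countable (hX : ¬ SeparableSpace X) :
    ∃ ε > 0, ∃ S : Set X, S.Pairwise (fun x y => ε ≤ dist x y) ∧ ¬ S.Countable := by
  by_contra! h
  refine hX (@SecondCountableTopology.to_separableSpace _ _ <|
    secondCountable_of_almost_dense_set fun ε hε => ?_)
  -- a maximal `ε`-separated set is `ε`-dense
  obtain ⟨S, hS⟩ := zorn_subset {S : Set X | S.Pairwise fun x y => ε ≤ dist x y}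
    fun c hc hchain => ⟨⋃₀ c, hchain.pairwise_sUnion.2 hc, fun _ => subset_sUnion_of_mem⟩
  refine ⟨S, h ε hε S hS.prop, fun x => ?_⟩
  by_contra! hfar
  have hx : (insert x S).Pairwise fun x y => ε ≤ dist x y :=
    pairwise_insert.2 ⟨hS.prop, fun y hy _ => ⟨(hfar y hy).le, dist_comm x y ▸ (hfar y hy).le⟩⟩
  exact (hfar x (hS.2 hx (subset_insert x S) (mem_insert x S))).not_ge (by simpa using hε.le)

theorem infDist_le_infDist_add_of_inter_closedBall_subset {x p : X} {A B : Set X} {δ : ℝ}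
    (hδ : 0 ≤ δ) (hpA : p ∈ A) (hB : B.Nonempty)
    (h : B ∩ closedBall x (dist x p - δ) ⊆ A) : infDist x A ≤ infDist x B + δ := by
  rw [← sub_le_iff_le_add, le_infDist hB]
  intro b hb
  by_cases hbx : dist x b ≤ dist x p - δ
  · have := infDist_le_dist_of_mem (x := x) (h ⟨hb, mem_closedBall'.2 hbx⟩)
    linarith
  · have := infDist_le_dist_of_mem (x := x) hpA
    linarith

theorem dist_infDist_infDist_le_of_inter_closedBall_eq {x p : X} {A B : Set X} {δ : ℝ}
    (hδ : 0 ≤ δ) (hpA : p ∈ A) (hpB : p ∈ B)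
    (h : A ∩ closedBall x (dist x p - δ) = B ∩ closedBall x (dist x p - δ)) :
    dist (infDist x A) (infDist x B) ≤ δ := by
  rw [Real.dist_eq, abs_sub_le_iff, sub_le_iff_le_add', sub_le_iff_le_add']
  exact ⟨infDist_le_infDist_add_of_inter_closedBall_subset hδ hpA ⟨p, hpB⟩ (h ▸ inter_subset_left),
    infDist_le_infDist_add_of_inter_closedBall_subset hδ hpB ⟨p, hpA⟩ (h ▸ inter_subset_left)⟩

end MetricSpace

section CantorCube

variable {X : Type*} {J : Type*} {ι : Option J → X}

def cubeSet (ι : Option J → X) (g : J → Bool) : Set X := ι '' {o | o.elim true g}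

theorem base_mem_cubeSet (g : J → Bool) : ι none ∈ cubeSet ι g :=
  mem_image_of_mem ι rfl

theorem cubeSet_inter_eq_of_eqOn {s : Set X} {g g' : J → Bool}
    (h : ∀ j, ι (some j) ∈ s → g j = g' j) : cubeSet ι g ∩ s = cubeSet ι g' ∩ s := by
  simp only [cubeSet, ← image_inter_preimage]
  congr 1
  ext (_ | j)
  · simp
  · exact and_congr_left fun hj => by simp [h j hj]

theorem injective_cubeSet (hι : Function.Injective ι) :
    Function.Injective (cubeSet (J := J) ι) := by
  intro g g' h
  funext j
  simpa using congrArg (some j ∈ ·) (image_injective.2 hι h)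

variable [MetricSpace X] {ε : ℝ}

theorem isClosed_cubeSet (hε : 0 < ε) (hι : Pairwise fun a b => ε ≤ dist (ι a) (ι b))
    (g : J → Bool) : IsClosed (cubeSet ι g) :=
  isClosed_of_pairwise_le_dist hε (hι.set_pairwise _).image

theorem continuous_infDist_cubeSet (hX : HasNiceClosedBalls X) (hε : 0 < ε)
    (hι : Pairwise fun a b => ε ≤ dist (ι a) (ι b)) (x : X) :
    Continuous fun g : J → Bool => infDist x (cubeSet ι g) := by
  refine Metric.continuous_iff'.2 fun g₀ η hη => ?_
  set ρ := dist x (ι none) - η / 2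
  have hF : (ι ∘ some ⁻¹' closedBall x ρ).Finite := by
    refine hX.finite_preimage_closedBall hε (hι.comp_of_injective (Option.some_injective J)) ?_
    exact (ne_univ_iff_exists_notMem _).2 ⟨ι none, by simp [ρ, dist_comm, hη]⟩
  filter_upwards [set_pi_mem_nhds hF fun j _ => mem_nhds_discrete.2 (mem_singleton (g₀ j))]
    with g hg
  refine (dist_infDist_infDist_le_of_inter_closedBall_eq (half_pos hη).le (base_mem_cubeSet g)
    (base_mem_cubeSet g₀) (cubeSet_inter_eq_of_eqOn hg)).trans_lt
    (half_lt_self hη)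

end CantorCube

section Wijsman

variable {X : Type*} [MetricSpace X]

theorem continuous_wijsman_iff {Y : Type*} [TopologicalSpace Y] {f : Y → CL X} :
    Continuous[_, WijsmanTopology X] f ↔ ∀ x, Continuous fun y => infDist x (f y).1 :=
  continuous_iInf_rng.trans (forall_congr' fun _ => continuous_induced_rng)

theorem injective_infDist_CL : Function.Injective fun (A : CL X) (x : X) => infDist x A.1 := by
  intro A B h
  refine Subtype.ext <| Set.ext fun y => ?_
  rw [A.2.2.mem_iff_infDist_zero A.2.1, B.2.2.mem_iff_infDist_zero B.2.1,
    show infDist y A.1 = infDist y B.1 from congrFun h y]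

theorem t2Space_wijsman : @T2Space (CL X) (WijsmanTopology X) :=
  let := WijsmanTopology X
  .of_injective_continuous injective_infDist_CL
    (continuous_pi fun _ => continuous_iInf_dom continuous_induced_dom)

theorem exists_isEmbedding_cantorCube_wijsman (hX : HasNiceClosedBalls X) {J : Type*} {ε : ℝ}
    (hε : 0 < ε) {ι : Option J → X} (hι : Pairwise fun a b => ε ≤ dist (ι a) (ι b)) :
    ∃ φ : (J → Bool) → CL X, @IsEmbedding _ _ _ (WijsmanTopology X) φ := by
  let := WijsmanTopology X
  have := t2Space_wijsman (X := X)
  have hι_inj : Function.Injective ι := fun a b hab =>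
    by_contra fun hne => (hι hne).not_gt (by simpa [hab] using hε)
  refine ⟨fun g => ⟨cubeSet ι g, ⟨_, base_mem_cubeSet g⟩, isClosed_cubeSet hε hι g⟩,
    (Continuous.isClosedEmbedding ?_ fun g g' h => ?_).isEmbedding⟩
  · exact continuous_wijsman_iff.2 (continuous_infDist_cubeSet hX hε hι)
  · exact injective_cubeSet hι_inj (congrArg Subtype.val h)

end Wijsman

section Ordinal

variable {K : Type*} (o : Ordinal)

theorem Ordinal.isClopen_Ioi (a : Ordinal) : IsClopen (Ioi a) :=
  ⟨Order.Ici_succ a ▸ isClosed_Ici, isOpen_Ioi⟩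

noncomputable def ordinalCode (f : K → Iic o) (p : K × Iio o) : Bool :=
  (Ioi (p.2 : Ordinal)).boolIndicator (f p.1)

theorem continuous_ordinalCode : Continuous (ordinalCode (K := K) o) :=
  continuous_pi fun p => ((continuous_boolIndicator_iff_isClopen _).2
    (Ordinal.isClopen_Ioi p.2)).comp (continuous_subtype_val.comp (continuous_apply p.1))

theorem injective_ordinalCode : Function.Injective (ordinalCode (K := K) o) := by
  intro f₁ f₂ h
  have key : ∀ {f f' : K → Iic o}, ordinalCode o f = ordinalCode o f' → ∀ k, f k ≤ f' k := by
    intro f f' h k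
    refine Subtype.coe_le_coe.1 (le_of_forall_lt fun a ha => ?_)
    have := congrFun h (k, ⟨a, ha.trans_le (f k).2⟩)
    simpa [ordinalCode, Set.boolIndicator, ha] using this
  exact funext fun k => le_antisymm (key h k) (key h.symm k)

theorem isEmbedding_ordinalCode : IsEmbedding (ordinalCode (K := K) o) :=
  have : CompactSpace (Iic o) := isCompact_iff_compactSpace.1 (Icc_bot (a := o) ▸ isCompact_Icc)
  ((continuous_ordinalCode o).isClosedEmbedding (injective_ordinalCode o)).isEmbedding

end Ordinal

universe u v in
open Cardinal in
theorem Set.nonempty_embedding_of_not_countable {X : Type u} {T : Type v} {S : Set X}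
    (hT : #T ≤ ℵ₁) (hS : ¬ S.Countable) : Nonempty (T ↪ S) := by
  rw [← lift_mk_le']
  refine le_trans (b := ℵ₁) ?_ ?_
  · simpa using lift_le.{u}.2 hT
  · simpa using not_le.1 (mt le_aleph0_iff_set_countable.1 hS)

/-- If `(X,d)` is non-separable with nice closed balls, then `(ω₁ + 1)^{ω₁}` embeds
into `(CL X, τ_{w(d)})`. -/
theorem stmt_13 {X : Type*} [MetricSpace X]
    (hsep : ¬ TopologicalSpace.SeparableSpace X)
    (hnice : ∀ (x : X) (r : ℝ), 0 ≤ r → Metric.closedBall x r ≠ Set.univ →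
      IsCompact (Metric.closedBall x r)) :
    ∃ f : (Quotient.out (Cardinal.aleph 1) → Set.Iic (Cardinal.aleph 1).ord) → CL X,
      @Topology.IsEmbedding _ _ _ (WijsmanTopology X) f := by
  obtain ⟨ε, hε, S, hS, hS_unc⟩ := exists_pairwise_le_dist_not_countable hsep
  have hcard : Cardinal.mk (Option (Quotient.out (Cardinal.aleph 1) ×
      Iio (Cardinal.aleph 1).ord)) ≤ Cardinal.aleph 1 := by
    rw [Cardinal.mk_option, Cardinal.mk_prod, Cardinal.mk_out, Cardinal.mk_Iio_ordinal,
      Cardinal.card_ord]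
    simp only [Cardinal.lift_aleph, Ordinal.lift_one]
    rw [Cardinal.mul_eq_self (Cardinal.aleph0_le_aleph 1),
      Cardinal.add_one_eq (Cardinal.aleph0_le_aleph 1)]
  obtain ⟨ι⟩ := Set.nonempty_embedding_of_not_countable hcard hS_unc
  obtain ⟨φ, hφ⟩ := exists_isEmbedding_cantorCube_wijsman hnice hε (ι := fun a => (ι a : X))
    fun a b hab => hS (ι a).2 (ι b).2 (Subtype.coe_injective.ne (ι.injective.ne hab))
  let := WijsmanTopology X
  exact ⟨φ ∘ ordinalCode _, hφ.comp (isEmbedding_ordinalCode _)⟩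
end

section
/- Let (X,d) be a non-separable metric space in which every closed proper ball is totally bounded. Then (ω₁ + 1)^{ω} embeds topologically into (CL(X), τ_{w(d)}). -/
/-!
Non-separability yields an uncountable `ε`-separated set, hence an `ε`-separated family
`pt : Option (ℕ × [0, ω₁]) → X`. A sequence `σ` of ordinals `≤ ω₁` is sent to the closed set of
those `pt (n, β)` with `β < σ n`, together with the base point `pt none`. Since `pt (n, β)` lies
in this set or at distance `≥ ε` from it, the distance functionals recover each coordinate `σ n`
through the open conditions `β < σ n` and `σ n ≤ β`. For the continuity of `σ ↦ d(z, A σ)`, lower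
semicontinuity uses that a proper closed ball is totally bounded, so it contains only finitely
many points of the family, and `σ n ≤ β` is open because every ordinal has a successor.
-/

open Metric Set Topology TopologicalSpace

theorem isOpen_Iic_of_succOrder {L : Type*} [LinearOrder L] [TopologicalSpace L] [OrderTopology L]
    [SuccOrder L] (b : L) : IsOpen (Iic b) := by
  by_cases hb : IsMax b
  · rw [hb.isTop.Iic_eq]
    exact isOpen_univ
  · rw [← Order.Iio_succ_of_not_isMax hb]
    exact isOpen_Iio

theorem continuous_of_isOpen_preimage_Ioi_Iio {α L : Type*} [TopologicalSpace α] [LinearOrder L]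
    [TopologicalSpace L] [OrderTopology L] {g : α → L} (hIoi : ∀ a, IsOpen (g ⁻¹' Ioi a))
    (hIio : ∀ a, IsOpen (g ⁻¹' Iio a)) : Continuous g :=
  continuous_iff_lower_upperSemicontinuous.2
    ⟨lowerSemicontinuous_iff_isOpen_preimage.2 hIoi, upperSemicontinuous_iff_isOpen_preimage.2 hIio⟩

theorem isInducing_of_isOpen_induced_setOf_lt {ι L Z : Type*} [LinearOrder L] [TopologicalSpace L]
    [OrderTopology L] [TopologicalSpace Z] {F : (ι → L) → Z} (hF : Continuous F)
    (hIoi : ∀ i a, IsOpen[induced F ‹_›] {σ | a < σ i})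
    (hIio : ∀ i a, IsOpen[induced F ‹_›] {σ | σ i < a}) : IsInducing F := by
  refine ⟨le_antisymm hF.le_induced (le_iInf fun i => continuous_iff_le_induced.1 ?_)⟩
  exact @continuous_of_isOpen_preimage_Ioi_Iio _ _ (induced F ‹_›) _ _ _ _ (hIoi i) (hIio i)

section Cardinal

open Cardinal

universe u v

theorem mk_Iic_ord_aleph_one : #(Iic (aleph.{u} 1).ord) = aleph 1 := by
  rw [← Order.Iio_succ, mk_Iio_ordinal, Order.succ_eq_add_one, Ordinal.card_add_one, card_ord,
    add_one_eq (aleph0_le_aleph 1), lift_aleph]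
  simp

theorem nonempty_embedding_of_not_countable {X : Type u} {S : Set X} (hS : ¬ S.Countable) :
    Nonempty (Option (ℕ × Iic (aleph.{v} 1).ord) ↪ S) := by
  have hmk : #(Option (ℕ × Iic (aleph.{v} 1).ord)) = aleph 1 := by
    rw [mk_option, mk_prod, mk_Iic_ord_aleph_one, mk_nat, lift_aleph0, lift_aleph, Ordinal.lift_one,
      aleph0_mul_eq (aleph0_le_aleph 1), add_one_eq (aleph0_le_aleph 1)]
  rw [← lift_mk_le'.{v + 1, u}, hmk, lift_aleph, Ordinal.lift_one, aleph_one_le_iff,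
    aleph0_lt_lift]
  exact not_le.1 (mt le_aleph0_iff_set_countable.1 hS)

end Cardinal

section MetricSpace

variable {X : Type*} [MetricSpace X]

theorem wijsmanTopology_eq_induced :
    WijsmanTopology X = induced (fun (A : CL X) (x : X) => infDist x A.1) Pi.topologicalSpace := by
  simp only [WijsmanTopology, Pi.topologicalSpace, induced_iInf, induced_compose]
  rfl

theorem isEmbedding_wijsman_of_isEmbedding_infDist {α : Type*} [TopologicalSpace α] {f : α → CL X}
    (hf : IsEmbedding fun a (x : X) => infDist x (f a).1) :
    @IsEmbedding _ _ _ (WijsmanTopology X) f :=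
  letI := WijsmanTopology X
  ⟨(IsInducing.of_comp_iff ⟨wijsmanTopology_eq_induced⟩).1 hf.isInducing,
    Function.Injective.of_comp (f := fun (A : CL X) (x : X) => infDist x A.1) hf.injective⟩

theorem exists_not_countable_pairwise_lt_dist (hX : ¬ SeparableSpace X) :
    ∃ ε > (0 : ℝ), ∃ S : Set X, ¬ S.Countable ∧ S.Pairwise fun x y => ε < dist x y := by
  by_contra! hcount
  suffices SecondCountableTopology X from hX inferInstance
  refine secondCountable_of_almost_dense_set fun ε hε => ?_
  lift ε to NNReal using hε.le
  obtain ⟨N, hN⟩ := zorn_subset (fun N : Set X => N ⊆ univ ∧ IsSeparated ε N) fun c hc hchain =>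
    ⟨⋃₀ c, ⟨subset_univ _, (pairwise_sUnion hchain.directedOn).2 fun s hs => (hc hs).2⟩,
      fun _ => subset_sUnion_of_mem⟩
  refine ⟨N, not_not.1 fun hN' => hcount ε hε N hN' fun x hx y hy hxy => ?_, fun x => ?_⟩
  · have h : (ε : ENNReal) < edist x y := hN.1.2 hx hy hxy
    rwa [edist_nndist, ENNReal.coe_lt_coe, ← NNReal.coe_lt_coe, coe_nndist] at h
  · obtain ⟨y, hy, hxy⟩ := IsCover.of_maximal_isSeparated hN (mem_univ x)
    have h : edist x y ≤ ε := hxy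
    rw [edist_nndist, ENNReal.coe_le_coe, ← NNReal.coe_le_coe, coe_nndist] at h
    exact ⟨y, hy, h⟩

theorem finite_setOf_mem_of_totallyBounded {ι : Type*} {ε : ℝ} (hε : 0 < ε) {pt : ι → X}
    (hpt : Pairwise fun i j => ε < dist (pt i) (pt j)) {s : Set X} (hs : TotallyBounded s) :
    {i | pt i ∈ s}.Finite := by
  obtain ⟨t, ht, hst⟩ := totallyBounded_iff.1 hs (ε / 2) (by positivity)
  refine (ht.biUnion fun y _ => Subsingleton.finite (s := {i | pt i ∈ ball y (ε / 2)}) ?_).subset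
    fun i hi => mem_iUnion₂.2 (by simpa using hst hi)
  intro i hi j hj
  by_contra hij
  have := dist_triangle_right (pt i) (pt j) y
  linarith [hpt hij, mem_ball.1 hi, mem_ball.1 hj]

end MetricSpace

section Marked

variable {L X : Type*} [LinearOrder L]

def markedIndices (σ : ℕ → L) : Set (Option (ℕ × L)) := insert none (some '' {p | p.2 < σ p.1})

@[simp]
theorem none_mem_markedIndices (σ : ℕ → L) : none ∈ markedIndices σ := mem_insert _ _

@[simp]
theorem some_mem_markedIndices {σ : ℕ → L} {p : ℕ × L} :
    some p ∈ markedIndices σ ↔ p.2 < σ p.1 := by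
  simp [markedIndices]

def markedSet (pt : Option (ℕ × L) → X) (σ : ℕ → L) : Set X := pt '' markedIndices σ

theorem apply_mem_markedSet (pt : Option (ℕ × L) → X) {σ : ℕ → L} {i : Option (ℕ × L)}
    (hi : i ∈ markedIndices σ) : pt i ∈ markedSet pt σ :=
  mem_image_of_mem pt hi

theorem markedSet_nonempty (pt : Option (ℕ × L) → X) (σ : ℕ → L) : (markedSet pt σ).Nonempty :=
  ⟨pt none, apply_mem_markedSet pt (none_mem_markedIndices σ)⟩

section Separated

variable [MetricSpace X] {pt : Option (ℕ × L) → X} {ε : ℝ}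

theorem isClosed_markedSet (hε : 0 < ε) (hpt : Pairwise fun i j => ε < dist (pt i) (pt j))
    (σ : ℕ → L) : IsClosed (markedSet pt σ) := by
  refine isClosed_of_pairwise_le_dist hε ?_
  rintro _ ⟨i, -, rfl⟩ _ ⟨j, -, rfl⟩ hne
  exact (hpt fun hij => hne (congrArg pt hij)).le

theorem le_infDist_markedSet (hpt : Pairwise fun i j => ε < dist (pt i) (pt j)) {σ : ℕ → L}
    {i : Option (ℕ × L)} (hi : i ∉ markedIndices σ) : ε ≤ infDist (pt i) (markedSet pt σ) := by
  refine (le_infDist (markedSet_nonempty pt σ)).2 ?_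
  rintro _ ⟨j, hj, rfl⟩
  exact (hpt fun hij => hi (by rwa [hij])).le

theorem infDist_markedSet_lt_iff (hε : 0 < ε) (hpt : Pairwise fun i j => ε < dist (pt i) (pt j))
    {σ : ℕ → L} {i : Option (ℕ × L)} :
    infDist (pt i) (markedSet pt σ) < ε ↔ i ∈ markedIndices σ := by
  refine ⟨fun h => by_contra fun hi => (le_infDist_markedSet hpt hi).not_gt h, fun hi => ?_⟩
  rwa [infDist_zero_of_mem (apply_mem_markedSet pt hi)]

theorem infDist_markedSet_pos_iff (hε : 0 < ε) (hpt : Pairwise fun i j => ε < dist (pt i) (pt j))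
    {σ : ℕ → L} {i : Option (ℕ × L)} :
    0 < infDist (pt i) (markedSet pt σ) ↔ i ∉ markedIndices σ := by
  refine ⟨fun h hi => ?_, fun hi => hε.trans_le (le_infDist_markedSet hpt hi)⟩
  rw [infDist_zero_of_mem (apply_mem_markedSet pt hi)] at h
  exact h.false

end Separated

variable [TopologicalSpace L] [OrderTopology L]

theorem isOpen_setOf_mem_markedIndices (i : Option (ℕ × L)) :
    IsOpen {σ : ℕ → L | i ∈ markedIndices σ} := by
  rcases i with _ | ⟨n, b⟩
  · simp
  · simp only [some_mem_markedIndices]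
    exact isOpen_lt continuous_const (continuous_apply n)

theorem isOpen_setOf_notMem_markedIndices [SuccOrder L] (i : Option (ℕ × L)) :
    IsOpen {σ : ℕ → L | i ∉ markedIndices σ} := by
  rcases i with _ | ⟨n, b⟩
  · simp
  · simp only [some_mem_markedIndices, not_lt]
    exact (isOpen_Iic_of_succOrder b).preimage (continuous_apply (A := fun _ => L) n)

variable [MetricSpace X]

theorem upperSemicontinuous_infDist_markedSet (pt : Option (ℕ × L) → X) (z : X) :
    UpperSemicontinuous fun σ => infDist z (markedSet pt σ) := by
  refine upperSemicontinuous_iff_isOpen_preimage.2 fun y => ?_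
  have : (fun σ => infDist z (markedSet pt σ)) ⁻¹' Iio y =
      ⋃ i ∈ {i | dist z (pt i) < y}, {σ | i ∈ markedIndices σ} := by
    ext σ
    rw [mem_preimage, mem_Iio, infDist_lt_iff (markedSet_nonempty pt σ)]
    simp [markedSet, and_comm]
  rw [this]
  exact isOpen_biUnion fun i _ => isOpen_setOf_mem_markedIndices i

theorem lowerSemicontinuous_infDist_markedSet [SuccOrder L] {pt : Option (ℕ × L) → X}
    (hfin : ∀ z r, closedBall z r ≠ univ → {i | pt i ∈ closedBall z r}.Finite) (z : X) :
    LowerSemicontinuous fun σ => infDist z (markedSet pt σ) := by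
  intro σ y hy
  obtain ⟨r, hyr, hr⟩ := exists_between hy
  have hle : ∀ i ∈ markedIndices σ, infDist z (markedSet pt σ) ≤ dist z (pt i) :=
    fun i hi => infDist_le_dist_of_mem (apply_mem_markedSet pt hi)
  have hball : closedBall z r ≠ univ := fun h => by
    have := mem_closedBall'.1 (h ▸ mem_univ (pt none))
    linarith [hle none (none_mem_markedIndices σ)]
  have hJ : ∀ i ∈ {i | pt i ∈ closedBall z r}, i ∉ markedIndices σ := fun i hi hiσ => by
    linarith [hle i hiσ, mem_closedBall'.1 hi]
  filter_upwards [((hfin z r hball).isOpen_biInter fun i _ =>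
    isOpen_setOf_notMem_markedIndices i).mem_nhds (mem_iInter₂.2 hJ)] with τ hτ
  refine hyr.trans_le ((le_infDist (markedSet_nonempty pt τ)).2 ?_)
  rintro _ ⟨i, hi, rfl⟩
  by_contra! hlt
  exact mem_iInter₂.1 hτ i (mem_closedBall'.2 hlt.le) hi

theorem isEmbedding_infDist_markedSet [SuccOrder L] {pt : Option (ℕ × L) → X} {ε : ℝ}
    (hε : 0 < ε) (hpt : Pairwise fun i j => ε < dist (pt i) (pt j))
    (hfin : ∀ z r, closedBall z r ≠ univ → {i | pt i ∈ closedBall z r}.Finite) :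
    IsEmbedding fun σ (x : X) => infDist x (markedSet pt σ) := by
  have hcont : Continuous fun σ (x : X) => infDist x (markedSet pt σ) :=
    continuous_pi fun z => continuous_iff_lower_upperSemicontinuous.2
      ⟨lowerSemicontinuous_infDist_markedSet hfin z, upperSemicontinuous_infDist_markedSet pt z⟩
  refine (isInducing_of_isOpen_induced_setOf_lt hcont
    (fun n a => isOpen_induced_iff.2 ⟨{g | g (pt (some (n, a))) < ε}, ?_, ?_⟩)
    (fun n a => isOpen_induced_iff.2
      ⟨⋃ b ∈ Iio a, {g | 0 < g (pt (some (n, b)))}, ?_, ?_⟩)).isEmbedding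
  · exact isOpen_lt (continuous_apply _) continuous_const
  · ext σ
    simp [infDist_markedSet_lt_iff hε hpt]
  · exact isOpen_biUnion fun b _ => isOpen_lt continuous_const (continuous_apply _)
  · ext σ
    simp only [preimage_iUnion₂, mem_iUnion₂, mem_preimage, mem_ofPred_eq, mem_Iio,
      infDist_markedSet_pos_iff hε hpt, some_mem_markedIndices, not_lt]
    exact ⟨fun ⟨b, hba, hb⟩ => hb.trans_lt hba, fun h => ⟨σ n, h, le_rfl⟩⟩

end Marked

/-- If `(X,d)` is non-separable and every closed proper ball is totally bounded,
then `(ω₁ + 1)^{ω}` embeds into `(CL X, τ_{w(d)})`. -/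
theorem stmt_15 {X : Type*} [MetricSpace X]
    (hsep : ¬ TopologicalSpace.SeparableSpace X)
    (htb : ∀ (x : X) (r : ℝ), 0 ≤ r → Metric.closedBall x r ≠ Set.univ →
      TotallyBounded (Metric.closedBall x r)) :
    ∃ f : (ℕ → Set.Iic (Cardinal.aleph 1).ord) → CL X,
      @Topology.IsEmbedding _ _ _ (WijsmanTopology X) f := by
  obtain ⟨ε, hε, S, hS, hSsep⟩ := exists_not_countable_pairwise_lt_dist hsep
  obtain ⟨e⟩ := nonempty_embedding_of_not_countable hS
  set pt := fun i => (e i : X)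
  have hpt : Pairwise fun i j => ε < dist (pt i) (pt j) := fun i j hij =>
    hSsep (e i).2 (e j).2 (Subtype.coe_injective.ne (e.injective.ne hij))
  have hfin (z : X) (r : ℝ) (hr : closedBall z r ≠ univ) : {i | pt i ∈ closedBall z r}.Finite := by
    refine finite_setOf_mem_of_totallyBounded hε hpt ?_
    rcases le_or_gt 0 r with h | h
    · exact htb z r h hr
    · simp [closedBall_eq_empty.2 h]
  exact ⟨fun σ => ⟨markedSet pt σ, markedSet_nonempty pt σ, isClosed_markedSet hε hpt σ⟩,
    isEmbedding_wijsman_of_isEmbedding_infDist (isEmbedding_infDist_markedSet hε hpt hfin)⟩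
end

section
/- Let (X,d) be a non-separable perfect metric space (no isolated points). Then (ω₁ + 1)^{ω₁} embeds topologically into (CL(X), τ_{w(d)}), the hyperspace of nonempty closed subsets of X with the Wijsman topology. -/
/-!
Non-separability yields an uncountable `ε`-separated set, hence an `ε`-separated family `y`
indexed by `S = ω₁ × (ω₁ + 1)`, and perfectness yields `z s ≠ y s` with `d(z s, y s) < ε / 8`.
The closed "background" `B = {p | ∀ s, d(z s, y s) ≤ d(p, z s)}` contains every `y s` and no
`z s`, so the sets `Φ u = B ∪ z '' u` (`u ⊆ S`) are closed and pairwise distinct. For fixed `x`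
at most one `z s` is closer to `x` than `B` is, so `d(x, Φ u)` depends on at most one coordinate
of `u`: hence `u ↦ Φ u` is continuous on the compact Cantor cube `2^S`, thus an embedding.
Finally `g ↦ {(i, α) | α < g i}` embeds `(ω₁ + 1)^ω₁` into `2^S`, the sets `(α, ω₁]` being clopen.
-/

open Metric Set Topology TopologicalSpace Cardinal
open scoped NNReal ENNReal

section Separated

variable {X : Type*} [PseudoEMetricSpace X]

lemma Metric.exists_isSeparated_isCover (ε : ℝ≥0) :
    ∃ N : Set X, IsSeparated ε N ∧ IsCover ε univ N := by
  obtain ⟨N, hN⟩ := zorn_subset {N : Set X | IsSeparated ε N} fun c hc hchain ↦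
    ⟨⋃₀ c, (pairwise_sUnion hchain.directedOn).2 hc, fun _ ↦ subset_sUnion_of_mem⟩
  exact ⟨N, hN.prop, .of_maximal_isSeparated (by simpa using hN)⟩

lemma Metric.exists_not_countable_isSeparated (h : ¬ SeparableSpace X) :
    ∃ ε : ℝ≥0, ε ≠ 0 ∧ ∃ Y : Set X, ¬ Y.Countable ∧ IsSeparated ε Y := by
  by_contra! hcount
  refine h (EMetric.secondCountable_of_almost_dense_set fun ε hε ↦ ?_).to_separableSpace
  obtain ⟨δ, hδ, hδε⟩ := ENNReal.lt_iff_exists_nnreal_btwn.1 hε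
  obtain ⟨N, hN_sep, hN_cover⟩ := exists_isSeparated_isCover (X := X) δ
  refine ⟨N, by_contra fun hN ↦ hcount δ (by exact_mod_cast hδ.ne') N hN hN_sep,
    univ_subset_iff.1 ?_⟩
  refine (isCover_iff_subset_iUnion_closedEBall.1 hN_cover).trans ?_
  exact iUnion₂_mono fun x _ ↦ closedEBall_subset_closedEBall hδε.le

end Separated

lemma Metric.IsSeparated.lt_dist {X : Type*} [PseudoMetricSpace X] {ε : ℝ≥0} {Y : Set X}
    (hY : IsSeparated ε Y) {a b : X} (ha : a ∈ Y) (hb : b ∈ Y) (hab : a ≠ b) :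
    (ε : ℝ) < dist a b := by
  have : (ε : ℝ≥0∞) < edist a b := hY ha hb hab
  rwa [edist_nndist, ENNReal.coe_lt_coe, ← NNReal.coe_lt_coe, coe_nndist] at this

namespace WijsmanTopology

variable {X : Type*} [MetricSpace X]

lemma continuous_iff {K : Type*} [TopologicalSpace K] {f : K → CL X} :
    Continuous[_, WijsmanTopology X] f ↔ ∀ x, Continuous fun k ↦ infDist x (f k).1 := by
  rw [WijsmanTopology, continuous_iInf_rng]
  exact forall_congr' fun x ↦ continuous_induced_rng

lemma continuous_infDist (x : X) :
    Continuous[WijsmanTopology X, _] fun A : CL X ↦ infDist x A.1 :=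
  continuous_iff_le_induced.2 (iInf_le _ x)

lemma t2Space : @T2Space (CL X) (WijsmanTopology X) := by
  let := WijsmanTopology X
  refine ⟨fun A B hAB ↦ ?_⟩
  obtain ⟨x, hx⟩ : ∃ x, infDist x A.1 ≠ infDist x B.1 := by
    by_contra! h
    refine hAB (Subtype.ext (Set.ext fun w ↦ ?_))
    rw [A.2.2.mem_iff_infDist_zero A.2.1, B.2.2.mem_iff_infDist_zero B.2.1, h w]
  exact separated_by_continuous (continuous_infDist x) hx

end WijsmanTopology

lemma Metric.infDist_union_inter_ball {X : Type*} [PseudoMetricSpace X] {B : Set X}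
    (hB : B.Nonempty) (C : Set X) (x : X) :
    infDist x (B ∪ C) = infDist x (B ∪ C ∩ ball x (infDist x B)) := by
  have hle : infDist x (B ∪ C) ≤ infDist x (B ∪ C ∩ ball x (infDist x B)) :=
    infDist_le_infDist_of_subset (union_subset_union_right B inter_subset_left)
      (hB.mono subset_union_left)
  refine hle.antisymm ((le_infDist (hB.mono subset_union_left)).2 ?_)
  rintro p (hp | hp)
  · exact infDist_le_dist_of_mem (Or.inl hp)
  · by_cases hpx : p ∈ ball x (infDist x B)
    · exact infDist_le_dist_of_mem (Or.inr ⟨hp, hpx⟩)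
    · calc infDist x (B ∪ C ∩ ball x (infDist x B)) ≤ infDist x B :=
            infDist_le_infDist_of_subset subset_union_left hB
        _ ≤ dist x p := by rw [dist_comm]; exact not_lt.1 hpx

lemma isLocallyConstant_of_eqOn {S D Y : Type*} [TopologicalSpace D] [DiscreteTopology D]
    {T : Set S} (hT : T.Finite) {f : (S → D) → Y} (hf : ∀ b c, EqOn b c T → f b = f c) :
    IsLocallyConstant f := by
  refine (IsLocallyConstant.iff_exists_open f).2 fun b ↦ ⟨⋂ s ∈ T, {c | c s = b s}, ?_, ?_, ?_⟩
  · exact hT.isOpen_biInter fun s _ ↦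
      (continuous_apply (A := fun _ ↦ D) s).isOpen_preimage {b s} (isOpen_discrete _)
  · exact mem_iInter₂.2 fun s _ ↦ rfl
  · exact fun c hc ↦ hf c b fun s hs ↦ mem_iInter₂.1 hc s hs

namespace Marked

variable {X S : Type*} [MetricSpace X] {ε : ℝ} {y z : S → X}

def background (y z : S → X) : Set X := {p | ∀ s, dist (z s) (y s) ≤ dist p (z s)}

lemma isClosed_background : IsClosed (background y z) := by
  simp only [background, ofPred_forall]
  exact isClosed_iInter fun s ↦ isClosed_le continuous_const (continuous_id.dist continuous_const)

lemma mem_background (hy : Pairwise fun s t ↦ ε ≤ dist (y s) (y t))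
    (hzy : ∀ s, dist (z s) (y s) ≤ ε / 8) (t : S) : y t ∈ background y z := by
  intro s
  rcases eq_or_ne s t with rfl | hst
  · exact (dist_comm _ _).le
  · linarith [dist_triangle (y t) (z s) (y s), hy hst, hzy s, dist_comm (y s) (y t),
      dist_nonneg (x := z s) (y := y s)]

lemma notMem_background (hz : ∀ s, z s ≠ y s) (s : S) : z s ∉ background y z := fun h ↦
  (h s).not_gt (by simpa using hz s)

lemma le_dist_of_ne (hy : Pairwise fun s t ↦ ε ≤ dist (y s) (y t))
    (hzy : ∀ s, dist (z s) (y s) ≤ ε / 8) {s t : S} (hst : s ≠ t) :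
    3 * ε / 4 ≤ dist (z s) (z t) := by
  linarith [dist_triangle4 (y s) (z s) (z t) (y t), hy hst, hzy s, hzy t, dist_comm (y s) (z s)]

/-- Such points `z s` lie within `ε / 4` of `x`, while `z` is `3ε/4`-separated. -/
lemma subsingleton_preimage_ball (hy : Pairwise fun s t ↦ ε ≤ dist (y s) (y t))
    (hzy : ∀ s, dist (z s) (y s) ≤ ε / 8) (x : X) :
    (z ⁻¹' ball x (infDist x (background y z))).Subsingleton := by
  intro s₁ hs₁ s₂ hs₂
  by_contra hne
  rw [mem_preimage, mem_ball] at hs₁ hs₂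
  have hx : x ∉ background y z := fun hx ↦ by
    rw [infDist_zero_of_mem hx] at hs₁
    exact (dist_nonneg.trans_lt hs₁).false
  obtain ⟨t, ht⟩ : ∃ t, dist x (z t) < dist (z t) (y t) := by
    simpa [background] using hx
  have hB : infDist x (background y z) ≤ dist x (y t) :=
    infDist_le_dist_of_mem (mem_background hy hzy t)
  linarith [dist_triangle x (z t) (y t), dist_triangle_right (z s₁) (z s₂) x,
    le_dist_of_ne hy hzy hne, hzy t, dist_nonneg (x := x) (y := z t)]

def set (y z : S → X) (u : Set S) : Set X := background y z ∪ z '' u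

lemma isClosed_set (hε : 0 < ε) (hy : Pairwise fun s t ↦ ε ≤ dist (y s) (y t))
    (hzy : ∀ s, dist (z s) (y s) ≤ ε / 8) (u : Set S) : IsClosed (Marked.set y z u) := by
  refine isClosed_background.union
    (isClosed_of_pairwise_le_dist (ε := 3 * ε / 4) (by positivity) ?_)
  rintro _ ⟨s, -, rfl⟩ _ ⟨t, -, rfl⟩ hne
  exact le_dist_of_ne hy hzy (ne_of_apply_ne z hne)

lemma background_nonempty [Nonempty S] (hy : Pairwise fun s t ↦ ε ≤ dist (y s) (y t))
    (hzy : ∀ s, dist (z s) (y s) ≤ ε / 8) : (background y z).Nonempty :=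
  ⟨_, mem_background hy hzy (Classical.arbitrary S)⟩

lemma injective_set (hy : Pairwise fun s t ↦ ε ≤ dist (y s) (y t)) (hz : ∀ s, z s ≠ y s)
    (hzy : ∀ s, dist (z s) (y s) ≤ ε / 8) : Function.Injective (Marked.set y z) := by
  have hz_inj : Function.Injective z := fun s t h ↦ by
    by_contra hne
    have := le_dist_of_ne hy hzy hne
    rw [h, dist_self] at this
    linarith [dist_pos.2 (hz s), hzy s]
  have hmem (u : Set S) (s : S) : z s ∈ Marked.set y z u ↔ s ∈ u := by
    simp [Marked.set, notMem_background hz s, hz_inj.mem_set_image]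
  intro u v huv
  ext s
  rw [← hmem u, ← hmem v, huv]

lemma infDist_set_inter_preimage_ball [Nonempty S]
    (hy : Pairwise fun s t ↦ ε ≤ dist (y s) (y t)) (hzy : ∀ s, dist (z s) (y s) ≤ ε / 8)
    (x : X) (u : Set S) :
    infDist x (Marked.set y z (u ∩ z ⁻¹' ball x (infDist x (background y z)))) =
      infDist x (Marked.set y z u) := by
  rw [Marked.set, Marked.set, image_inter_preimage]
  exact (infDist_union_inter_ball (background_nonempty hy hzy) _ x).symm

noncomputable def toCL [Nonempty S] (hε : 0 < ε)
    (hy : Pairwise fun s t ↦ ε ≤ dist (y s) (y t)) (hzy : ∀ s, dist (z s) (y s) ≤ ε / 8)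
    (b : S → Bool) : CL X :=
  ⟨Marked.set y z {s | b s}, (background_nonempty hy hzy).mono subset_union_left,
    isClosed_set hε hy hzy _⟩

theorem isEmbedding_toCL [Nonempty S] (hε : 0 < ε)
    (hy : Pairwise fun s t ↦ ε ≤ dist (y s) (y t)) (hz : ∀ s, z s ≠ y s)
    (hzy : ∀ s, dist (z s) (y s) ≤ ε / 8) :
    @IsEmbedding _ _ _ (WijsmanTopology X) (toCL hε hy hzy) := by
  let := WijsmanTopology X
  have := WijsmanTopology.t2Space (X := X)
  refine (Continuous.isClosedEmbedding ?_ fun b c hbc ↦ ?_).isEmbedding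
  · refine WijsmanTopology.continuous_iff.2 fun x ↦ IsLocallyConstant.continuous ?_
    refine isLocallyConstant_of_eqOn (subsingleton_preimage_ball hy hzy x).finite fun b c hbc ↦ ?_
    have hbc' : {s | b s} ∩ z ⁻¹' ball x (infDist x (background y z)) =
        {s | c s} ∩ z ⁻¹' ball x (infDist x (background y z)) := by
      ext s
      exact and_congr_left fun hs ↦ by rw [mem_ofPred_eq, mem_ofPred_eq, hbc hs]
    simp only [toCL]
    rw [← infDist_set_inter_preimage_ball hy hzy, hbc', infDist_set_inter_preimage_ball hy hzy]
  · funext s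
    exact Bool.eq_iff_iff.2 <|
      Set.ext_iff.1 (injective_set hy hz hzy (congrArg Subtype.val hbc)) s

end Marked

lemma isClopen_Ioi_of_succOrder {α : Type*} [LinearOrder α] [TopologicalSpace α]
    [OrderTopology α] [SuccOrder α] [NoMaxOrder α] (a : α) : IsClopen (Ioi a) := by
  refine ⟨?_, isOpen_Ioi⟩
  rw [← isOpen_compl_iff, compl_Ioi, ← Order.Iio_succ]
  exact isOpen_Iio

lemma Ordinal.isEmbedding_decide_lt (ι : Type*) (o : Ordinal) :
    IsEmbedding fun (g : ι → Iic o) (p : ι × Iic o) ↦ decide (p.2 < g p.1) := by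
  have : CompactSpace (Iic o) :=
    isCompact_iff_compactSpace.1 (by rw [← Icc_bot]; exact isCompact_Icc)
  refine (Continuous.isClosedEmbedding ?_ fun g h hgh ↦ funext fun i ↦ ?_).isEmbedding
  · refine continuous_pi fun p ↦ Continuous.comp (g := fun ξ : Iic o ↦ decide (p.2 < ξ))
      ((continuous_bool_rng true).2 ?_) (continuous_apply p.1)
    simpa [preimage, ← Subtype.coe_lt_coe] using
      (isClopen_Ioi_of_succOrder (p.2 : Ordinal)).preimage continuous_subtype_val
  · have hi (a : Iic o) := congrFun hgh (i, a)
    by_contra hne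
    rcases lt_or_gt_of_ne hne with hlt | hlt
    · simpa [hlt] using hi (g i)
    · simpa [hlt] using hi (h i)

lemma mk_out_aleph_one_prod_Iic_ord :
    #(Quotient.out (aleph 1 : Cardinal.{u}) × Iic (aleph 1 : Cardinal.{v}).ord) = aleph 1 := by
  rw [mk_prod, mk_out, ← Order.Iio_succ, Order.succ_eq_add_one, mk_Iio_ordinal,
    Ordinal.card_add_one, card_ord, add_one_eq (aleph0_le_aleph 1)]
  simp only [lift_aleph, Ordinal.lift_one]
  exact mul_eq_self (aleph0_le_aleph 1)

lemma nonempty_embedding_of_mk_le_aleph_one {S : Type u} {X : Type v} {Y : Set X}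
    (hS : #S ≤ aleph 1) (hY : ¬ Y.Countable) : Nonempty (S ↪ Y) := by
  rw [← lift_mk_le']
  calc lift.{v} #S ≤ lift.{v} (aleph 1) := lift_le.2 hS
    _ = lift.{u} (aleph 1) := by simp only [lift_aleph, Ordinal.lift_one]
    _ ≤ lift.{u} #Y :=
      lift_le.2 (aleph_one_le_iff.2 (not_le.1 (hY ∘ le_aleph0_iff_set_countable.1)))

lemma exists_ne_dist_lt {X : Type*} [MetricSpace X] {x : X} (hx : (𝓝[≠] x).NeBot) {r : ℝ}
    (hr : 0 < r) : ∃ z, z ≠ x ∧ dist z x < r := by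
  obtain ⟨z, hz, hzx⟩ := hx.nonempty_of_mem (inter_mem_nhdsWithin _ (ball_mem_nhds x hr))
  exact ⟨z, hz, hzx⟩

/-- If `(X,d)` is a non-separable perfect metric space (no isolated points), then
`(ω₁ + 1)^{ω₁}` embeds into `(CL X, τ_{w(d)})`. -/
theorem stmt_16 {X : Type*} [MetricSpace X]
    (hsep : ¬ TopologicalSpace.SeparableSpace X)
    (hperf : ∀ x : X, (nhdsWithin x {x}ᶜ).NeBot) :
    ∃ f : (Quotient.out (Cardinal.aleph 1) → Set.Iic (Cardinal.aleph 1).ord) → CL X,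
      @Topology.IsEmbedding _ _ _ (WijsmanTopology X) f := by
  obtain ⟨ε, hε_ne, Y, hY, hY_sep⟩ := exists_not_countable_isSeparated hsep
  obtain ⟨j⟩ := nonempty_embedding_of_mk_le_aleph_one mk_out_aleph_one_prod_Iic_ord.le hY
  have hε : (0 : ℝ) < ε := NNReal.coe_pos.2 (pos_iff_ne_zero.2 hε_ne)
  have hy : Pairwise fun s t ↦ (ε : ℝ) ≤ dist (j s : X) (j t) := fun s t hst ↦
    (hY_sep.lt_dist (j s).2 (j t).2 (Subtype.coe_injective.ne (j.injective.ne hst))).le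
  choose z hz hzy using fun s ↦ exists_ne_dist_lt (hperf (j s)) (r := ε / 8) (by positivity)
  have : Nonempty (Quotient.out (ℵ₁ : Cardinal.{_}) × Iic (ℵ₁ : Cardinal.{_}).ord) :=
    mk_ne_zero_iff.1 (by rw [mk_out_aleph_one_prod_Iic_ord]; exact (aleph_pos 1).ne')
  let := WijsmanTopology X
  exact ⟨_, (Marked.isEmbedding_toCL hε hy hz fun s ↦ (hzy s).le).comp
    (Ordinal.isEmbedding_decide_lt _ _)⟩
end
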